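/- arXiv:1201.3119 — 2 statements merged into one kernel-verified Lean document; each statement's English description precedes it below -/
import Mathlib

section
/- Let σ be an exceptional permutation and let m satisfy 3 ≤ m ≤ |σ|. If m is odd, then σ has no simple pattern of size m. If m is even, then σ has exactly one simple pattern of size m, namely the exceptional permutation of size m of the same type as σ. -/
open Equiv Filter Asymptotics

/-- `π` (of size `k`) is a pattern of `σ` (of size `n`): there is a strictly increasing
sequence of positions of `σ` whose values are order-isomorphic to `π`. -/
def IsPattern {k n : ℕ} (π : Equiv.Perm (Fin k)) (σ : Equiv.Perm (Fin n)) : Prop :=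
  ∃ f : Fin k ↪o Fin n, ∀ i j : Fin k, π i < π j ↔ σ (f i) < σ (f j)

/-- A set of positions is consecutive (an integer interval). -/
def IsConsecutive {n : ℕ} (s : Finset (Fin n)) : Prop :=
  ∀ ⦃i j k : Fin n⦄, i ∈ s → k ∈ s → i ≤ j → j ≤ k → j ∈ s

/-- An interval of a permutation: a consecutive set of positions whose image is
a consecutive set of values. -/
def IsPermInterval {n : ℕ} (σ : Equiv.Perm (Fin n)) (s : Finset (Fin n)) : Prop :=
  IsConsecutive s ∧ IsConsecutive (s.image σ)

/-- A permutation is simple if its only intervals are the trivial ones. -/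
def IsSimple {n : ℕ} (σ : Equiv.Perm (Fin n)) : Prop :=
  ∀ s : Finset (Fin n), IsPermInterval σ s → s.card ≤ 1 ∨ s = Finset.univ

/-- Value at (0-indexed) position `i` of the exceptional permutation of size `2*m`
of type `t` (0-indexed types: paper's types 1,2,3,4 are `t = 0,1,2,3`). -/
def exceptionalValue (t : Fin 4) (m i : ℕ) : ℕ :=
  if t = 0 then (if i < m then 2 * i + 1 else 2 * (i - m))
  else if t = 1 then (if i < m then 2 * (m - i - 1) else 2 * (2 * m - i) - 1)
  else if t = 2 then (if i % 2 = 0 then m + i / 2 else i / 2)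
  else (if i % 2 = 0 then m - i / 2 - 1 else 2 * m - i / 2 - 1)

/-- `σ` is the exceptional permutation of type `t` (of its size). -/
def IsExceptionalOfType {n : ℕ} (t : Fin 4) (σ : Equiv.Perm (Fin n)) : Prop :=
  ∃ m : ℕ, 2 ≤ m ∧ n = 2 * m ∧ ∀ i : Fin n, (σ i : ℕ) = exceptionalValue t m (i : ℕ)

/-- `σ` is exceptional. -/
def IsExceptional {n : ℕ} (σ : Equiv.Perm (Fin n)) : Prop :=
  ∃ t : Fin 4, IsExceptionalOfType t σ

/-- `τ` is the permutation obtained from `σ` by deleting the point at position `i`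
(and renormalizing). -/
def IsDeletion {n : ℕ} (σ : Equiv.Perm (Fin (n + 1))) (i : Fin (n + 1))
    (τ : Equiv.Perm (Fin n)) : Prop :=
  ∀ j k : Fin n, τ j < τ k ↔ σ (i.succAbove j) < σ (i.succAbove k)

/-- The permutation 2413. -/
def p2413 : Equiv.Perm (Fin 4) := ⟨![1, 3, 0, 2], ![2, 0, 3, 1], by decide, by decide⟩

/-- The permutation 3142. -/
def p3142 : Equiv.Perm (Fin 4) := ⟨![2, 0, 3, 1], ![1, 3, 0, 2], by decide, by decide⟩

/-- The number of simple permutations of size `n`. -/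
noncomputable def simpleCount (n : ℕ) : ℕ :=
  Nat.card {σ : Equiv.Perm (Fin n) // IsSimple σ}

/-- The average outdegree `D_n = s_{n-1} · n(n-4) / s_n`. -/
noncomputable def avgOutdeg (n : ℕ) : ℝ :=
  (simpleCount (n - 1) : ℝ) * ((n : ℝ) * ((n : ℝ) - 4)) / (simpleCount n : ℝ)

/-- The outdegree of a permutation: the number of positions whose deletion
yields a simple permutation. -/
noncomputable def outdeg : ∀ {n : ℕ}, Equiv.Perm (Fin n) → ℕ
  | 0, _ => 0
  | _ + 1, σ =>
    Nat.card {i // ∃ τ, IsDeletion σ i τ ∧ IsSimple τ}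

/-- `S_n^k`: the number of simple permutations of size `n` with outdegree `k`. -/
noncomputable def outdegCount (n k : ℕ) : ℕ :=
  Nat.card {σ : Equiv.Perm (Fin n) // IsSimple σ ∧ outdeg σ = k}

section Aux
open Finset

lemma E0_def (M i : ℕ) : exceptionalValue 0 M i = if i < M then 2 * i + 1 else 2 * (i - M) := by
  simp [exceptionalValue]

lemma E1_def (M i : ℕ) :
    exceptionalValue 1 M i = if i < M then 2 * (M - i - 1) else 2 * (2 * M - i) - 1 := by
  rfl

lemma E2_def (M i : ℕ) :
    exceptionalValue 2 M i = if i % 2 = 0 then M + i / 2 else i / 2 := by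
  rfl

lemma E3_def (M i : ℕ) :
    exceptionalValue 3 M i = if i % 2 = 0 then M - i / 2 - 1 else 2 * M - i / 2 - 1 := by
  rfl

lemma E0_lt {M i : ℕ} (h : i < 2 * M) : exceptionalValue 0 M i < 2 * M := by
  rw [E0_def]; split_ifs <;> omega

lemma E2_lt {M i : ℕ} (h : i < 2 * M) : exceptionalValue 2 M i < 2 * M := by
  rw [E2_def]; split_ifs <;> omega

lemma E2_E0 {M i : ℕ} (h : i < 2 * M) :
    exceptionalValue 2 M (exceptionalValue 0 M i) = i := by
  rw [E0_def, E2_def]; split_ifs <;> omega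

lemma E0_E2 {M i : ℕ} (h : i < 2 * M) :
    exceptionalValue 0 M (exceptionalValue 2 M i) = i := by
  rw [E0_def, E2_def]; split_ifs <;> omega

lemma E0_add_E1 {M i : ℕ} (h : i < 2 * M) :
    exceptionalValue 0 M i + exceptionalValue 1 M i = 2 * M - 1 := by
  rw [E0_def, E1_def]; split_ifs <;> omega

lemma E2_add_E3 {M i : ℕ} (h : i < 2 * M) :
    exceptionalValue 2 M i + exceptionalValue 3 M i = 2 * M - 1 := by
  rw [E2_def, E3_def]; split_ifs <;> omega

lemma card_filter_Ico {m : ℕ} (l u : ℕ) (hu : u ≤ m) :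
    (Finset.univ.filter fun y : Fin m => l ≤ (y : ℕ) ∧ (y : ℕ) < u).card = u - l := by
  rw [← Nat.card_Ico l u]
  exact Finset.card_bij' (fun y _ => (y : ℕ))
    (fun v hv => ⟨v, by simp [Finset.mem_Ico] at hv; omega⟩)
    (by intro a ha; simp [Finset.mem_Ico] at ha ⊢; omega)
    (by intro a ha; simp at ha ⊢; omega)
    (by intro a ha; rfl)
    (by intro a ha; rfl)

lemma card_filter_lt {m : ℕ} (u : ℕ) (hu : u ≤ m) :
    (Finset.univ.filter fun y : Fin m => (y : ℕ) < u).card = u := by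
  have h := card_filter_Ico (m := m) 0 u hu
  simpa using h

/-- A downward-closed predicate on `Fin m` holds exactly on an initial segment. -/
lemma downclosed_iff {m : ℕ} (P : Fin m → Prop) [DecidablePred P]
    (hP : ∀ i j : Fin m, i ≤ j → P j → P i) (i : Fin m) :
    P i ↔ (i : ℕ) < (Finset.univ.filter P).card := by
  constructor
  · intro hPi
    have hsub : (Finset.univ.filter fun y : Fin m => (y : ℕ) < (i : ℕ) + 1)
        ⊆ Finset.univ.filter P := by
      intro j hj
      simp at hj ⊢
      exact hP j i (by omega) hPi
    have := Finset.card_le_card hsub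
    rw [card_filter_lt _ (by omega)] at this
    omega
  · intro hlt
    by_contra hPi
    have hsub : Finset.univ.filter P ⊆
        Finset.univ.filter fun y : Fin m => (y : ℕ) < (i : ℕ) := by
      intro j hj
      simp at hj ⊢
      by_contra hij
      exact hPi (hP i j (by omega) hj)
    have := Finset.card_le_card hsub
    rw [card_filter_lt _ (by omega)] at this
    omega

/-- The value of a permutation at a point equals the number of positions with
smaller value. -/
lemma perm_val_eq_rank {m : ℕ} (π : Equiv.Perm (Fin m)) (x : Fin m) :
    (π x : ℕ) = (Finset.univ.filter fun y => π y < π x).card := by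
  have h1 : (Finset.univ.filter fun y => π y < π x).card
      = (Finset.univ.filter fun v : Fin m => (v : ℕ) < (π x : ℕ)).card := by
    exact Finset.card_bij' (fun y _ => π y)
      (fun v _ => π.symm v)
      (by intro a ha; simp at ha ⊢; exact ha)
      (by intro a ha; simp at ha ⊢; exact ha)
      (by intro a ha; simp)
      (by intro a ha; simp)
  rw [h1, card_filter_lt _ (by omega)]


lemma image_univ_perm {q : ℕ} (ρ : Equiv.Perm (Fin q)) : Finset.univ.image ⇑ρ = Finset.univ := by
  apply Finset.eq_univ_of_forall
  intro v
  simp only [Finset.mem_image]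
  exact ⟨ρ.symm v, Finset.mem_univ _, ρ.apply_symm_apply v⟩

/-- A simple permutation of size ≥ 3 has no two adjacent positions with
consecutive increasing values. -/
lemma simple_no_adjacent {m : ℕ} (hm : 3 ≤ m) (π : Equiv.Perm (Fin m)) (hπ : IsSimple π)
    (x y : Fin m) (hxy : (y : ℕ) = (x : ℕ) + 1) (hv : (π y : ℕ) = (π x : ℕ) + 1) : False := by
  have hne : x ≠ y := by intro h; rw [h] at hxy; omega
  set s : Finset (Fin m) := {x, y} with hs
  have hmem : ∀ a : Fin m, a ∈ s ↔ a = x ∨ a = y := by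
    intro a; simp [hs]
  have hcons : IsConsecutive s := by
    intro a b c ha hc hab hbc
    rw [hmem] at ha hc ⊢
    rw [Fin.le_def] at hab hbc
    have hav : (a : ℕ) = (x : ℕ) ∨ (a : ℕ) = (y : ℕ) := by
      rcases ha with h | h <;> [exact Or.inl (by rw [h]); exact Or.inr (by rw [h])]
    have hcv : (c : ℕ) = (x : ℕ) ∨ (c : ℕ) = (y : ℕ) := by
      rcases hc with h | h <;> [exact Or.inl (by rw [h]); exact Or.inr (by rw [h])]
    have : (b : ℕ) = (x : ℕ) ∨ (b : ℕ) = (y : ℕ) := by omega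
    rcases this with h | h
    · exact Or.inl (Fin.ext h)
    · exact Or.inr (Fin.ext h)
  have himg : s.image ⇑π = {π x, π y} := by
    simp [hs]
  have hcons2 : IsConsecutive (s.image ⇑π) := by
    rw [himg]
    intro a b c ha hc hab hbc
    simp only [Finset.mem_insert, Finset.mem_singleton] at ha hc ⊢
    rw [Fin.le_def] at hab hbc
    have hav : (a : ℕ) = (π x : ℕ) ∨ (a : ℕ) = (π y : ℕ) := by
      rcases ha with h | h <;> [exact Or.inl (by rw [h]); exact Or.inr (by rw [h])]
    have hcv : (c : ℕ) = (π x : ℕ) ∨ (c : ℕ) = (π y : ℕ) := by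
      rcases hc with h | h <;> [exact Or.inl (by rw [h]); exact Or.inr (by rw [h])]
    have : (b : ℕ) = (π x : ℕ) ∨ (b : ℕ) = (π y : ℕ) := by omega
    rcases this with h | h
    · exact Or.inl (Fin.ext h)
    · exact Or.inr (Fin.ext h)
  have hcard : s.card = 2 := by
    rw [hs, Finset.card_insert_of_notMem (by simp [hne]), Finset.card_singleton]
  rcases hπ s ⟨hcons, hcons2⟩ with h | h
  · omega
  · have := Finset.card_univ (α := Fin m)
    rw [← h, hcard] at this
    simp at this
    omega

/-- A simple permutation of size ≥ 3 does not fix value 0 at position 0. -/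
lemma simple_pi_zero {m : ℕ} (hm : 3 ≤ m) (π : Equiv.Perm (Fin m)) (hπ : IsSimple π) :
    (π ⟨0, by omega⟩ : ℕ) ≠ 0 := by
  intro h0
  set z : Fin m := ⟨0, by omega⟩ with hz
  have hπz : π z = z := Fin.ext h0
  set s : Finset (Fin m) := Finset.univ.erase z with hs
  have hcons : IsConsecutive s := by
    intro a b c ha hc hab hbc
    rw [hs, Finset.mem_erase] at ha ⊢
    refine ⟨?_, Finset.mem_univ _⟩
    have : (a : ℕ) ≠ 0 := fun h => ha.1 (Fin.ext h)
    rw [Fin.le_def] at hab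
    intro h
    rw [h] at hab
    simp [hz] at hab
    omega
  have himg : s.image ⇑π = s := by
    rw [hs, Finset.image_erase π.injective, image_univ_perm, hπz]
  have hcard : s.card = m - 1 := by
    rw [hs, Finset.card_erase_of_mem (Finset.mem_univ _)]
    simp
  rcases hπ s ⟨hcons, by rw [himg]; exact hcons⟩ with h | h
  · omega
  · have := congrArg Finset.card h
    rw [hcard] at this
    simp at this
    omega

/-- A simple permutation of size ≥ 3 does not fix the last value at the last position. -/
lemma simple_pi_last {m : ℕ} (hm : 3 ≤ m) (π : Equiv.Perm (Fin m)) (hπ : IsSimple π) :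
    (π ⟨m - 1, by omega⟩ : ℕ) ≠ m - 1 := by
  intro h0
  set z : Fin m := ⟨m - 1, by omega⟩ with hz
  have hπz : π z = z := Fin.ext h0
  set s : Finset (Fin m) := Finset.univ.erase z with hs
  have hcons : IsConsecutive s := by
    intro a b c ha hc hab hbc
    rw [hs, Finset.mem_erase] at hc ⊢
    refine ⟨?_, Finset.mem_univ _⟩
    have hcne : (c : ℕ) ≠ m - 1 := fun h => hc.1 (Fin.ext h)
    have := c.isLt
    rw [Fin.le_def] at hbc
    intro h
    rw [h] at hbc
    simp [hz] at hbc
    omega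
  have himg : s.image ⇑π = s := by
    rw [hs, Finset.image_erase π.injective, image_univ_perm, hπz]
  have hcard : s.card = m - 1 := by
    rw [hs, Finset.card_erase_of_mem (Finset.mem_univ _)]
    simp
  rcases hπ s ⟨hcons, by rw [himg]; exact hcons⟩ with h | h
  · omega
  · have := congrArg Finset.card h
    rw [hcard] at this
    simp at this
    omega


lemma chain_up (h : ℕ → ℕ) (bound : ℕ) (hstep : ∀ i, i + 1 < bound → h i + 1 ≤ h (i + 1)) :
    ∀ d i, i + d < bound → h i + d ≤ h (i + d) := by
  intro d
  induction d with
  | zero => intro i _; simp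
  | succ d ih =>
    intro i hi
    have h1 := ih i (by omega)
    have h2 := hstep (i + d) (by omega)
    have e : i + (d + 1) = (i + d) + 1 := by omega
    rw [e]
    omega

lemma chain_down (h : ℕ → ℕ) (lo bound : ℕ)
    (hstep : ∀ j, lo ≤ j → j + 1 < bound → h (j + 1) + 1 ≤ h j) :
    ∀ d j, lo ≤ j → j + d < bound → h (j + d) + d ≤ h j := by
  intro d
  induction d with
  | zero => intro j _ _; simp
  | succ d ih =>
    intro j hj hjd
    have h1 := ih (j + 1) (by omega) (by omega)
    have h2 := hstep j hj (by omega)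
    have e : j + (d + 1) = (j + 1) + d := by omega
    rw [e]
    omega


section Main0
open Finset

lemma main0 {M m : ℕ} (σ : Equiv.Perm (Fin (2 * M)))
    (hσ : ∀ i : Fin (2 * M), (σ i : ℕ) = exceptionalValue 0 M (i : ℕ))
    (h3 : 3 ≤ m) (π : Equiv.Perm (Fin m)) (hsimp : IsSimple π) (hpat : IsPattern π σ) :
    ∃ s : ℕ, m = 2 * s ∧ ∀ i : Fin m, (π i : ℕ) = exceptionalValue 0 s (i : ℕ) := by
  classical
  obtain ⟨f, hf⟩ := hpat
  set g : Fin m → ℕ := fun i => (σ (f i) : ℕ) with hgdef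
  have hg : ∀ i j, π i < π j ↔ g i < g j := by
    intro i j
    rw [hf i j]
    exact Fin.lt_def
  have hginj : ∀ i j : Fin m, g i = g j → i = j := by
    intro i j h
    by_contra hne
    have hπne : π i ≠ π j := fun he => hne (π.injective he)
    rcases lt_or_gt_of_ne hπne with hl | hl
    · have := (hg i j).mp hl; omega
    · have := (hg j i).mp hl; omega
  set P : Fin m → Prop := fun i => (f i : ℕ) < M with hPdef
  have hPdec : DecidablePred P := fun i => by simp only [hPdef]; infer_instance
  have hflt : ∀ i j : Fin m, (i : ℕ) < (j : ℕ) ↔ (f i : ℕ) < (f j : ℕ) := by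
    intro i j
    constructor
    · intro h
      exact Fin.lt_def.mp (f.strictMono (Fin.lt_def.mpr h))
    · intro h
      exact Fin.lt_def.mp (f.lt_iff_lt.mp (Fin.lt_def.mpr h))
  have hPdown : ∀ i j : Fin m, i ≤ j → P j → P i := by
    intro i j hij hPj
    have : (f i : ℕ) ≤ (f j : ℕ) := Fin.le_def.mp (f.monotone hij)
    simp only [hPdef] at hPj ⊢
    omega
  set s : ℕ := (Finset.univ.filter P).card with hsdef
  have hPs : ∀ i : Fin m, P i ↔ (i : ℕ) < s := fun i => downclosed_iff P hPdown i
  have hsm : s ≤ m := le_trans (Finset.card_filter_le _ _) (by simp)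
  have hgP : ∀ i, P i → g i = 2 * (f i : ℕ) + 1 := by
    intro i hi
    rw [hgdef]
    simp only [hσ (f i), E0_def]
    rw [if_pos hi]
  have hgN : ∀ i, ¬ P i → g i = 2 * ((f i : ℕ) - M) := by
    intro i hi
    rw [hgdef]
    simp only [hσ (f i), E0_def]
    rw [if_neg hi]
  have hPP : ∀ i j, P i → P j → ((i : ℕ) < (j : ℕ) ↔ g i < g j) := by
    intro i j hi hj
    rw [hgP i hi, hgP j hj]
    have := hflt i j
    omega
  have hNN : ∀ i j, ¬ P i → ¬ P j → ((i : ℕ) < (j : ℕ) ↔ g i < g j) := by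
    intro i j hi hj
    rw [hgN i hi, hgN j hj]
    have := hflt i j
    have h1 : M ≤ (f i : ℕ) := by simp only [hPdef] at hi; omega
    have h2 : M ≤ (f j : ℕ) := by simp only [hPdef] at hj; omega
    omega
  have hrk : ∀ x, (π x : ℕ) = (Finset.univ.filter fun y => g y < g x).card := by
    intro x
    rw [perm_val_eq_rank π x]
    congr 1
    apply Finset.filter_congr
    intro y _
    rw [hg]
  set A : Finset (Fin m) := Finset.univ.filter P with hAdef
  set B : Finset (Fin m) := Finset.univ.filter (fun i => ¬ P i) with hBdef
  have hAcard : A.card = s := rfl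
  have hBcard : B.card = m - s := by
    have h := Finset.card_filter_add_card_filter_not (s := Finset.univ) P
    rw [← hAdef, ← hBdef, hAcard] at h
    simp only [Finset.card_univ, Fintype.card_fin] at h
    omega
  have hsplit : ∀ x, (Finset.univ.filter fun y => g y < g x).card
      = (A.filter fun y => g y < g x).card + (B.filter fun y => g y < g x).card := by
    intro x
    have h1 : A.filter (fun y => g y < g x)
        = (Finset.univ.filter fun y => g y < g x).filter P := Finset.filter_comm _ _ _
    have h2 : B.filter (fun y => g y < g x)
        = (Finset.univ.filter fun y => g y < g x).filter (fun i => ¬ P i) :=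
      Finset.filter_comm _ _ _
    rw [h1, h2, Finset.card_filter_add_card_filter_not]
  have hcA_P : ∀ x, P x → (A.filter fun y => g y < g x).card = (x : ℕ) := by
    intro x hx
    have heq : A.filter (fun y => g y < g x)
        = Finset.univ.filter (fun y : Fin m => (y : ℕ) < (x : ℕ)) := by
      ext y
      simp only [hAdef, Finset.mem_filter, Finset.filter_filter, Finset.mem_univ, true_and]
      constructor
      · rintro ⟨hPy, hgy⟩
        exact (hPP y x hPy hx).mpr hgy
      · intro hyx
        have hPy := hPdown y x (Fin.le_def.mpr (le_of_lt hyx)) hx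
        exact ⟨hPy, (hPP y x hPy hx).mp hyx⟩
    rw [heq, card_filter_lt _ (le_of_lt x.isLt)]
  have hcB_N : ∀ x, ¬ P x → (B.filter fun y => g y < g x).card = (x : ℕ) - s := by
    intro x hx
    have heq : B.filter (fun y => g y < g x)
        = Finset.univ.filter (fun y : Fin m => s ≤ (y : ℕ) ∧ (y : ℕ) < (x : ℕ)) := by
      ext y
      simp only [hBdef, Finset.mem_filter, Finset.filter_filter, Finset.mem_univ, true_and]
      constructor
      · rintro ⟨hPy, hgy⟩
        have hys : s ≤ (y : ℕ) := by rw [hPs] at hPy; omega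
        exact ⟨hys, (hNN y x hPy hx).mpr hgy⟩
      · rintro ⟨hys, hyx⟩
        have hPy : ¬ P y := by rw [hPs]; omega
        exact ⟨hPy, (hNN y x hPy hx).mp hyx⟩
    rw [heq, card_filter_Ico _ _ (le_of_lt x.isLt)]
  have hcA_N : ∀ x, ¬ P x →
      (A.filter fun y => g y < g x).card + (A.filter fun y => g x < g y).card = s := by
    intro x hx
    have h := Finset.card_filter_add_card_filter_not (s := A) (fun y => g y < g x)
    rw [hAcard] at h
    have heq : A.filter (fun y => ¬ g y < g x) = A.filter (fun y => g x < g y) := by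
      apply Finset.filter_congr
      intro y hy
      have hPy : P y := (Finset.mem_filter.mp hy).2
      have hne : g y ≠ g x := by
        intro h'
        rw [hginj y x h'] at hPy
        exact hx hPy
      constructor <;> intro <;> omega
    rw [heq] at h
    exact h
  set G : ℕ → ℕ := fun i => if h : i < m then g ⟨i, h⟩ else 0 with hGdef
  have hG : ∀ x : Fin m, G (x : ℕ) = g x := by
    intro x
    simp only [hGdef, x.isLt, dif_pos]
  set cb : ℕ → ℕ := fun i => (B.filter fun y => g y < G i).card with hcbdef
  set ea : ℕ → ℕ := fun i => (A.filter fun y => G i < g y).card with headef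
  have hcbx : ∀ x : Fin m, cb (x : ℕ) = (B.filter fun y => g y < g x).card := by
    intro x; simp only [hcbdef, hG x]
  have heax : ∀ x : Fin m, ea (x : ℕ) = (A.filter fun y => g x < g y).card := by
    intro x; simp only [headef, hG x]
  have hcbub : ∀ i, cb i ≤ m - s := fun i =>
    le_trans (Finset.card_filter_le _ _) (le_of_eq hBcard)
  have heaub : ∀ i, ea i ≤ s := fun i =>
    le_trans (Finset.card_filter_le _ _) (le_of_eq hAcard)
  have hrkP : ∀ x : Fin m, P x → (π x : ℕ) = (x : ℕ) + cb (x : ℕ) := by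
    intro x hx
    rw [hrk x, hsplit x, hcA_P x hx, hcbx x]
  have hrkN : ∀ x : Fin m, ¬ P x → (π x : ℕ) + ea (x : ℕ) = (x : ℕ) := by
    intro x hx
    have h1 := hcA_N x hx
    have h2 := hcB_N x hx
    have hsx : s ≤ (x : ℕ) := by rw [hPs] at hx; omega
    rw [hrk x, hsplit x, h2, heax x]
    omega
  have hstepA : ∀ i : ℕ, i + 1 < s → cb i + 1 ≤ cb (i + 1) := by
    intro i hi
    have him : i < m := by omega
    have him1 : i + 1 < m := by omega
    set x : Fin m := ⟨i, him⟩ with hxdef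
    set y : Fin m := ⟨i + 1, him1⟩ with hydef
    have hPx : P x := (hPs x).mpr (by simp [hxdef]; omega)
    have hPy : P y := (hPs y).mpr (by simp [hydef]; omega)
    have hgxy : g x < g y := (hPP x y hPx hPy).mp (by simp [hxdef, hydef])
    have hlt : (π x : ℕ) < (π y : ℕ) := by
      rw [← Fin.lt_def, hg]; exact hgxy
    have hne : (π y : ℕ) ≠ (π x : ℕ) + 1 := fun h =>
      simple_no_adjacent h3 π hsimp x y rfl h
    have h1 := hrkP x hPx
    have h2 := hrkP y hPy
    have hxv : (x : ℕ) = i := rfl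
    have hyv : (y : ℕ) = i + 1 := rfl
    rw [hxv] at h1
    rw [hyv] at h2
    omega
  have hstepB : ∀ j : ℕ, s ≤ j → j + 1 < m → ea (j + 1) + 1 ≤ ea j := by
    intro j hj hjm
    set x : Fin m := ⟨j, by omega⟩ with hxdef
    set y : Fin m := ⟨j + 1, hjm⟩ with hydef
    have hPx : ¬ P x := by rw [hPs]; simp [hxdef]; omega
    have hPy : ¬ P y := by rw [hPs]; simp [hydef]; omega
    have hgxy : g x < g y := (hNN x y hPx hPy).mp (by simp [hxdef, hydef])
    have hlt : (π x : ℕ) < (π y : ℕ) := by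
      rw [← Fin.lt_def, hg]; exact hgxy
    have hne : (π y : ℕ) ≠ (π x : ℕ) + 1 := fun h =>
      simple_no_adjacent h3 π hsimp x y rfl h
    have h1 := hrkN x hPx
    have h2 := hrkN y hPy
    have h3' := heaub (j + 1)
    have hxv : (x : ℕ) = j := rfl
    have hyv : (y : ℕ) = j + 1 := rfl
    rw [hxv] at h1
    rw [hyv] at h2
    omega
  have hs1 : 1 ≤ s := by
    by_contra hc
    push_neg at hc
    set x0 : Fin m := ⟨0, by omega⟩ with hx0
    have hNx : ¬ P x0 := by rw [hPs]; omega
    have h1 := hrkN x0 hNx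
    have h0 : (π x0 : ℕ) ≠ 0 := simple_pi_zero h3 π hsimp
    have hxv : (x0 : ℕ) = 0 := rfl
    rw [hxv] at h1
    omega
  have hsm1 : s < m := by
    by_contra hc
    push_neg at hc
    set xl : Fin m := ⟨m - 1, by omega⟩ with hxl
    have hPx : P xl := by rw [hPs]; simp [hxl]; omega
    have h1 := hrkP xl hPx
    have hub := hcbub (m - 1)
    have hl : (π xl : ℕ) ≠ m - 1 := simple_pi_last h3 π hsimp
    have hxv : (xl : ℕ) = m - 1 := rfl
    rw [hxv] at h1
    omega
  have hcb0 : 1 ≤ cb 0 := by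
    set x0 : Fin m := ⟨0, by omega⟩ with hx0
    have hPx : P x0 := (hPs x0).mpr (by simp [hx0]; omega)
    have h1 := hrkP x0 hPx
    have h0 : (π x0 : ℕ) ≠ 0 := simple_pi_zero h3 π hsimp
    have hxv : (x0 : ℕ) = 0 := rfl
    rw [hxv] at h1
    omega
  have healast : 1 ≤ ea (m - 1) := by
    set xl : Fin m := ⟨m - 1, by omega⟩ with hxl
    have hNx : ¬ P xl := by rw [hPs]; simp [hxl]; omega
    have h1 := hrkN xl hNx
    have hl : (π xl : ℕ) ≠ m - 1 := simple_pi_last h3 π hsimp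
    have := (π xl).isLt
    have hxv : (xl : ℕ) = m - 1 := rfl
    rw [hxv] at h1
    omega
  have hchainA := chain_up cb s hstepA
  have h1 : s ≤ m - s := by
    have ha := hchainA (s - 1) 0 (by omega)
    have e : 0 + (s - 1) = s - 1 := by omega
    rw [e] at ha
    have := hcbub (s - 1)
    omega
  have hchainB := chain_down ea s m hstepB
  have h2 : m - s ≤ s := by
    have hb := hchainB (m - 1 - s) s le_rfl (by omega)
    have e : s + (m - 1 - s) = m - 1 := by omega
    rw [e] at hb
    have := heaub s
    omega
  have hms : m = 2 * s := by omega
  refine ⟨s, hms, ?_⟩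
  intro x
  by_cases hx : P x
  · have hxs : (x : ℕ) < s := (hPs x).mp hx
    have hlo := hchainA (x : ℕ) 0 (by omega)
    have e1 : 0 + (x : ℕ) = (x : ℕ) := by omega
    rw [e1] at hlo
    have hhi := hchainA (s - 1 - (x : ℕ)) (x : ℕ) (by omega)
    have e2 : (x : ℕ) + (s - 1 - (x : ℕ)) = s - 1 := by omega
    rw [e2] at hhi
    have hub := hcbub (s - 1)
    have hcbeq : cb (x : ℕ) = (x : ℕ) + 1 := by omega
    rw [hrkP x hx, hcbeq, E0_def, if_pos hxs]
    omega
  · have hxs : s ≤ (x : ℕ) := by rw [hPs] at hx; omega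
    have hrx := hrkN x hx
    have hlo := hchainB ((x : ℕ) - s) s le_rfl (by omega)
    have e1 : s + ((x : ℕ) - s) = (x : ℕ) := by omega
    rw [e1] at hlo
    have hhi := hchainB (m - 1 - (x : ℕ)) (x : ℕ) hxs (by omega)
    have e2 : (x : ℕ) + (m - 1 - (x : ℕ)) = m - 1 := by omega
    rw [e2] at hhi
    have hub := heaub s
    have := healast
    have := x.isLt
    rw [E0_def, if_neg (by omega)]
    omega

end Main0

section Transports

lemma consec_of_rev {q : ℕ} {t : Finset (Fin q)} (h : IsConsecutive (t.image Fin.rev)) :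
    IsConsecutive t := by
  intro i j k hi hk hij hjk
  have h1 : Fin.rev k ∈ t.image Fin.rev := Finset.mem_image_of_mem _ hk
  have h2 : Fin.rev i ∈ t.image Fin.rev := Finset.mem_image_of_mem _ hi
  have h3 : Fin.rev j ∈ t.image Fin.rev :=
    h h1 h2 (Fin.rev_le_rev.mpr hjk) (Fin.rev_le_rev.mpr hij)
  obtain ⟨x, hx, he⟩ := Finset.mem_image.mp h3
  rwa [Fin.rev_inj.mp he] at hx

lemma simple_compl {q : ℕ} (ρ : Equiv.Perm (Fin q)) (h : IsSimple ρ) :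
    IsSimple (ρ.trans Fin.revPerm) := by
  intro s hs
  apply h s
  refine ⟨hs.1, ?_⟩
  have himg : s.image ⇑(ρ.trans Fin.revPerm) = (s.image ⇑ρ).image Fin.rev := by
    rw [Finset.image_image]
    rfl
  exact consec_of_rev (by rw [← himg]; exact hs.2)

lemma pattern_compl {k n : ℕ} {π : Equiv.Perm (Fin k)} {σ : Equiv.Perm (Fin n)}
    (h : IsPattern π σ) : IsPattern (π.trans Fin.revPerm) (σ.trans Fin.revPerm) := by
  obtain ⟨f, hf⟩ := h
  refine ⟨f, fun i j => ?_⟩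
  simp only [Equiv.trans_apply, Fin.revPerm_apply]
  rw [Fin.rev_lt_rev, Fin.rev_lt_rev, hf j i]

lemma simple_symm {q : ℕ} (σ : Equiv.Perm (Fin q)) (h : IsSimple σ) : IsSimple σ.symm := by
  intro s hs
  set s' : Finset (Fin q) := s.image ⇑σ.symm with hs'
  have h1 : s'.image ⇑σ = s := by
    rw [hs', Finset.image_image]
    have : ⇑σ ∘ ⇑σ.symm = id := by
      funext x
      simp
    rw [this, Finset.image_id]
  have hint : IsPermInterval σ s' := ⟨hs.2, by rw [h1]; exact hs.1⟩
  rcases h s' hint with hc | hu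
  · left
    rwa [hs', Finset.card_image_of_injective _ σ.symm.injective] at hc
  · right
    rw [← h1, hu, image_univ_perm]

lemma pattern_symm {k n : ℕ} {π : Equiv.Perm (Fin k)} {σ : Equiv.Perm (Fin n)}
    (h : IsPattern π σ) : IsPattern π.symm σ.symm := by
  obtain ⟨f, hf⟩ := h
  have hmono : StrictMono (fun i => σ (f (π.symm i))) := by
    intro i j hij
    exact (hf _ _).mp (by simpa using hij)
  refine ⟨OrderEmbedding.ofStrictMono _ hmono, fun i j => ?_⟩
  simp only [OrderEmbedding.coe_ofStrictMono]
  rw [Equiv.symm_apply_apply, Equiv.symm_apply_apply, f.lt_iff_lt]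

end Transports

section Eps

/-- The exceptional permutation of type 0 and size `2*k`. -/
def eps0 (k : ℕ) : Equiv.Perm (Fin (2 * k)) where
  toFun i := ⟨exceptionalValue 0 k (i : ℕ), E0_lt i.isLt⟩
  invFun v := ⟨exceptionalValue 2 k (v : ℕ), E2_lt v.isLt⟩
  left_inv i := Fin.ext (E2_E0 i.isLt)
  right_inv v := Fin.ext (E0_E2 v.isLt)

lemma eps0_val (k : ℕ) (i : Fin (2 * k)) : (eps0 k i : ℕ) = exceptionalValue 0 k (i : ℕ) := rfl

lemma eps0_simple (k : ℕ) (hk : 2 ≤ k) : IsSimple (eps0 k) := by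
  intro s hs
  by_cases hcard : s.card ≤ 1
  · exact Or.inl hcard
  right
  push_neg at hcard
  obtain ⟨a, ha, b, hb, hab⟩ := Finset.one_lt_card.mp hcard
  by_cases h1 : ∃ x ∈ s, (x : ℕ) < k
  · by_cases h2 : ∃ y ∈ s, k ≤ (y : ℕ)
    · -- spanning case: s contains positions k-1 and k, hence image is everything
      obtain ⟨x, hx, hxk⟩ := h1
      obtain ⟨y, hy, hyk⟩ := h2
      have hel1 : (⟨k - 1, by omega⟩ : Fin (2 * k)) ∈ s :=
        hs.1 hx hy (Fin.le_def.mpr (by simp; omega)) (Fin.le_def.mpr (by simp; omega))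
      have hel2 : (⟨k, by omega⟩ : Fin (2 * k)) ∈ s :=
        hs.1 hx hy (Fin.le_def.mpr (by simp; omega)) (Fin.le_def.mpr (by simp; omega))
      have hv1 : (⟨2 * k - 1, by omega⟩ : Fin (2 * k)) ∈ s.image ⇑(eps0 k) := by
        refine Finset.mem_image.mpr ⟨_, hel1, ?_⟩
        apply Fin.ext
        show exceptionalValue 0 k (k - 1) = 2 * k - 1
        rw [E0_def, if_pos (by omega)]
        omega
      have hv0 : (⟨0, by omega⟩ : Fin (2 * k)) ∈ s.image ⇑(eps0 k) := by
        refine Finset.mem_image.mpr ⟨_, hel2, ?_⟩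
        apply Fin.ext
        show exceptionalValue 0 k k = 0
        rw [E0_def, if_neg (by omega)]
        omega
      have hall : s.image ⇑(eps0 k) = Finset.univ := by
        apply Finset.eq_univ_of_forall
        intro v
        exact hs.2 hv0 hv1 (Fin.le_def.mpr (by simp)) (Fin.le_def.mpr (by simp; omega))
      apply Finset.eq_univ_of_card
      have := congrArg Finset.card hall
      rwa [Finset.card_image_of_injective _ (eps0 k).injective, Finset.card_univ] at this
    · -- all positions < k
      push_neg at h2
      exfalso
      have key : ∀ x y : Fin (2 * k), x ∈ s → y ∈ s → x < y → False := by
        intro x y hx hy hxy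
        have hxk : (x : ℕ) < k := h2 x hx
        have hyk : (y : ℕ) < k := h2 y hy
        have hxyv : (x : ℕ) < (y : ℕ) := Fin.lt_def.mp hxy
        have hu1 : eps0 k x ∈ s.image ⇑(eps0 k) := Finset.mem_image_of_mem _ hx
        have hu2 : eps0 k y ∈ s.image ⇑(eps0 k) := Finset.mem_image_of_mem _ hy
        have hvx : (eps0 k x : ℕ) = 2 * (x : ℕ) + 1 := by rw [eps0_val, E0_def, if_pos hxk]
        have hvy : (eps0 k y : ℕ) = 2 * (y : ℕ) + 1 := by rw [eps0_val, E0_def, if_pos hyk]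
        have hmid : (⟨2 * (x : ℕ) + 2, by omega⟩ : Fin (2 * k)) ∈ s.image ⇑(eps0 k) :=
          hs.2 hu1 hu2 (Fin.le_def.mpr (by simp; omega)) (Fin.le_def.mpr (by simp; omega))
        obtain ⟨p, hp, hpe⟩ := Finset.mem_image.mp hmid
        have hpv : (eps0 k p : ℕ) = 2 * (x : ℕ) + 2 := by rw [hpe]
        have hpk : (p : ℕ) < k := h2 p hp
        rw [eps0_val, E0_def, if_pos hpk] at hpv
        omega
      rcases hab.lt_or_gt with hl | hl
      · exact key a b ha hb hl
      · exact key b a hb ha hl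
  · -- all positions ≥ k
    push_neg at h1
    exfalso
    have key : ∀ x y : Fin (2 * k), x ∈ s → y ∈ s → x < y → False := by
      intro x y hx hy hxy
      have hxk : k ≤ (x : ℕ) := h1 x hx
      have hyk : k ≤ (y : ℕ) := h1 y hy
      have hxyv : (x : ℕ) < (y : ℕ) := Fin.lt_def.mp hxy
      have hu1 : eps0 k x ∈ s.image ⇑(eps0 k) := Finset.mem_image_of_mem _ hx
      have hu2 : eps0 k y ∈ s.image ⇑(eps0 k) := Finset.mem_image_of_mem _ hy
      have hvx : (eps0 k x : ℕ) = 2 * ((x : ℕ) - k) := by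
        rw [eps0_val, E0_def, if_neg (by omega)]
      have hvy : (eps0 k y : ℕ) = 2 * ((y : ℕ) - k) := by
        rw [eps0_val, E0_def, if_neg (by omega)]
      have hx2 := x.isLt
      have hy2 := y.isLt
      have hmid : (⟨2 * ((x : ℕ) - k) + 1, by omega⟩ : Fin (2 * k)) ∈ s.image ⇑(eps0 k) :=
        hs.2 hu1 hu2 (Fin.le_def.mpr (by simp; omega)) (Fin.le_def.mpr (by simp; omega))
      obtain ⟨p, hp, hpe⟩ := Finset.mem_image.mp hmid
      have hpv : (eps0 k p : ℕ) = 2 * ((x : ℕ) - k) + 1 := by rw [hpe]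
      have hpk : k ≤ (p : ℕ) := h1 p hp
      rw [eps0_val, E0_def, if_neg (by omega)] at hpv
      omega
    rcases hab.lt_or_gt with hl | hl
    · exact key a b ha hb hl
    · exact key b a hb ha hl

lemma exist0_pattern {M k : ℕ} (σ : Equiv.Perm (Fin (2 * M)))
    (hσ : ∀ i : Fin (2 * M), (σ i : ℕ) = exceptionalValue 0 M (i : ℕ))
    (hk1 : 1 ≤ k) (hkM : k ≤ M) : IsPattern (eps0 k) σ := by
  have hb : ∀ i : Fin (2 * k),
      (if (i : ℕ) < k then M - k + (i : ℕ) else 2 * M - 2 * k + (i : ℕ)) < 2 * M := by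
    intro i
    have := i.isLt
    split_ifs <;> omega
  set f0 : Fin (2 * k) → Fin (2 * M) := fun i =>
    ⟨if (i : ℕ) < k then M - k + (i : ℕ) else 2 * M - 2 * k + (i : ℕ), hb i⟩ with hf0
  have hmono : StrictMono f0 := by
    intro i j hij
    have hij' : (i : ℕ) < (j : ℕ) := Fin.lt_def.mp hij
    have hi2 := i.isLt
    have hj2 := j.isLt
    rw [Fin.lt_def]
    simp only [hf0]
    split_ifs <;> omega
  have hval : ∀ i : Fin (2 * k), (σ (f0 i) : ℕ)
      = if (i : ℕ) < k then 2 * (M - k + (i : ℕ)) + 1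
        else 2 * (M - k + ((i : ℕ) - k)) := by
    intro i
    have hi2 := i.isLt
    by_cases hik : (i : ℕ) < k
    · have hfv : ((f0 i : Fin (2 * M)) : ℕ) = M - k + (i : ℕ) := by
        show (if (i : ℕ) < k then M - k + (i : ℕ) else 2 * M - 2 * k + (i : ℕ)) = _
        rw [if_pos hik]
      rw [hσ (f0 i), E0_def, hfv, if_pos (by omega), if_pos hik]
    · have hfv : ((f0 i : Fin (2 * M)) : ℕ) = 2 * M - 2 * k + (i : ℕ) := by
        show (if (i : ℕ) < k then M - k + (i : ℕ) else 2 * M - 2 * k + (i : ℕ)) = _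
        rw [if_neg hik]
      rw [hσ (f0 i), E0_def, hfv, if_neg (by omega), if_neg hik]
      omega
  refine ⟨OrderEmbedding.ofStrictMono f0 hmono, fun i j => ?_⟩
  rw [Fin.lt_def, Fin.lt_def]
  simp only [OrderEmbedding.coe_ofStrictMono]
  rw [hval i, hval j, eps0_val, eps0_val, E0_def, E0_def]
  have hi2 := i.isLt
  have hj2 := j.isLt
  split_ifs <;> omega

end Eps

section Assembly

lemma compl_vals {M : ℕ} (t t' : Fin 4)
    (hsum : ∀ i, i < 2 * M →
      exceptionalValue t M i + exceptionalValue t' M i = 2 * M - 1)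
    (ρ : Equiv.Perm (Fin (2 * M))) (h : ∀ i, (ρ i : ℕ) = exceptionalValue t M (i : ℕ)) :
    ∀ i : Fin (2 * M), ((ρ.trans Fin.revPerm) i : ℕ) = exceptionalValue t' M (i : ℕ) := by
  intro i
  simp only [Equiv.trans_apply, Fin.revPerm_apply, Fin.val_rev, h i]
  have h1 := hsum (i : ℕ) i.isLt
  have h2 := i.isLt
  omega

lemma symm_vals_20 {M : ℕ} (ρ : Equiv.Perm (Fin (2 * M)))
    (h : ∀ i, (ρ i : ℕ) = exceptionalValue 2 M (i : ℕ)) :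
    ∀ i : Fin (2 * M), ((ρ.symm) i : ℕ) = exceptionalValue 0 M (i : ℕ) := by
  intro i
  have hb : exceptionalValue 0 M (i : ℕ) < 2 * M := E0_lt i.isLt
  have key : ρ ⟨exceptionalValue 0 M (i : ℕ), hb⟩ = i := by
    apply Fin.ext
    rw [h]
    exact E2_E0 i.isLt
  have h2 : ρ.symm i = ⟨exceptionalValue 0 M (i : ℕ), hb⟩ :=
    (Equiv.symm_apply_eq ρ).mpr key.symm
  rw [h2]

lemma symm_vals_02 {M : ℕ} (ρ : Equiv.Perm (Fin (2 * M)))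
    (h : ∀ i, (ρ i : ℕ) = exceptionalValue 0 M (i : ℕ)) :
    ∀ i : Fin (2 * M), ((ρ.symm) i : ℕ) = exceptionalValue 2 M (i : ℕ) := by
  intro i
  have hb : exceptionalValue 2 M (i : ℕ) < 2 * M := E2_lt i.isLt
  have key : ρ ⟨exceptionalValue 2 M (i : ℕ), hb⟩ = i := by
    apply Fin.ext
    rw [h]
    exact E0_E2 i.isLt
  have h2 : ρ.symm i = ⟨exceptionalValue 2 M (i : ℕ), hb⟩ :=
    (Equiv.symm_apply_eq ρ).mpr key.symm
  rw [h2]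

lemma trans_rev_rev {q : ℕ} (ρ : Equiv.Perm (Fin q)) :
    (ρ.trans Fin.revPerm).trans Fin.revPerm = ρ := by
  ext x
  simp

lemma main2 {M m : ℕ} (σ : Equiv.Perm (Fin (2 * M)))
    (hσ : ∀ i : Fin (2 * M), (σ i : ℕ) = exceptionalValue 2 M (i : ℕ))
    (h3 : 3 ≤ m) (π : Equiv.Perm (Fin m)) (hsimp : IsSimple π) (hpat : IsPattern π σ) :
    ∃ s : ℕ, m = 2 * s ∧ ∀ i : Fin m, (π i : ℕ) = exceptionalValue 2 s (i : ℕ) := by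
  obtain ⟨s, hm, hv⟩ := main0 σ.symm (symm_vals_20 σ hσ) h3 π.symm
    (simple_symm π hsimp) (pattern_symm hpat)
  refine ⟨s, hm, fun i => ?_⟩
  have hi2 : (i : ℕ) < 2 * s := by omega
  have hb : exceptionalValue 2 s (i : ℕ) < m := by
    have := E2_lt hi2; omega
  have key : π.symm ⟨exceptionalValue 2 s (i : ℕ), hb⟩ = i := by
    apply Fin.ext
    rw [hv]
    exact E0_E2 hi2
  have h4 : π i = ⟨exceptionalValue 2 s (i : ℕ), hb⟩ :=
    (Equiv.apply_eq_iff_eq_symm_apply π).mpr key.symm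
  rw [h4]

lemma main1 {M m : ℕ} (σ : Equiv.Perm (Fin (2 * M)))
    (hσ : ∀ i : Fin (2 * M), (σ i : ℕ) = exceptionalValue 1 M (i : ℕ))
    (h3 : 3 ≤ m) (π : Equiv.Perm (Fin m)) (hsimp : IsSimple π) (hpat : IsPattern π σ) :
    ∃ s : ℕ, m = 2 * s ∧ ∀ i : Fin m, (π i : ℕ) = exceptionalValue 1 s (i : ℕ) := by
  have hσ' := compl_vals 1 0 (fun i hi => by
    have := E0_add_E1 (M := M) hi; omega) σ hσ
  obtain ⟨s, hm, hv⟩ := main0 _ hσ' h3 (π.trans Fin.revPerm)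
    (simple_compl π hsimp) (pattern_compl hpat)
  refine ⟨s, hm, fun i => ?_⟩
  have h1 := hv i
  simp only [Equiv.trans_apply, Fin.revPerm_apply, Fin.val_rev] at h1
  have h2 := E0_add_E1 (M := s) (i := (i : ℕ)) (by omega)
  have := (π i).isLt
  have := i.isLt
  omega

lemma main3 {M m : ℕ} (σ : Equiv.Perm (Fin (2 * M)))
    (hσ : ∀ i : Fin (2 * M), (σ i : ℕ) = exceptionalValue 3 M (i : ℕ))
    (h3 : 3 ≤ m) (π : Equiv.Perm (Fin m)) (hsimp : IsSimple π) (hpat : IsPattern π σ) :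
    ∃ s : ℕ, m = 2 * s ∧ ∀ i : Fin m, (π i : ℕ) = exceptionalValue 3 s (i : ℕ) := by
  have hσ' := compl_vals 3 2 (fun i hi => by
    have := E2_add_E3 (M := M) hi; omega) σ hσ
  obtain ⟨s, hm, hv⟩ := main2 _ hσ' h3 (π.trans Fin.revPerm)
    (simple_compl π hsimp) (pattern_compl hpat)
  refine ⟨s, hm, fun i => ?_⟩
  have h1 := hv i
  simp only [Equiv.trans_apply, Fin.revPerm_apply, Fin.val_rev] at h1
  have h2 := E2_add_E3 (M := s) (i := (i : ℕ)) (by omega)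
  have := (π i).isLt
  have := i.isLt
  omega

lemma mainT (t : Fin 4) {M m : ℕ} (σ : Equiv.Perm (Fin (2 * M)))
    (hσ : ∀ i : Fin (2 * M), (σ i : ℕ) = exceptionalValue t M (i : ℕ))
    (h3 : 3 ≤ m) (π : Equiv.Perm (Fin m)) (hsimp : IsSimple π) (hpat : IsPattern π σ) :
    ∃ s : ℕ, m = 2 * s ∧ ∀ i : Fin m, (π i : ℕ) = exceptionalValue t s (i : ℕ) := by
  have ht : t = 0 ∨ t = 1 ∨ t = 2 ∨ t = 3 := by fin_cases t <;> simp
  rcases ht with rfl | rfl | rfl | rfl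
  · exact main0 σ hσ h3 π hsimp hpat
  · exact main1 σ hσ h3 π hsimp hpat
  · exact main2 σ hσ h3 π hsimp hpat
  · exact main3 σ hσ h3 π hsimp hpat

lemma existT (t : Fin 4) {M k : ℕ} (σ : Equiv.Perm (Fin (2 * M)))
    (hσ : ∀ i : Fin (2 * M), (σ i : ℕ) = exceptionalValue t M (i : ℕ))
    (hk2 : 2 ≤ k) (hkM : k ≤ M) :
    ∃ π : Equiv.Perm (Fin (2 * k)), IsSimple π ∧ IsPattern π σ ∧
      ∀ i : Fin (2 * k), (π i : ℕ) = exceptionalValue t k (i : ℕ) := by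
  have ht : t = 0 ∨ t = 1 ∨ t = 2 ∨ t = 3 := by fin_cases t <;> simp
  rcases ht with rfl | rfl | rfl | rfl
  · exact ⟨eps0 k, eps0_simple k hk2, exist0_pattern σ hσ (by omega) hkM,
      fun i => eps0_val k i⟩
  · have hσ' := compl_vals 1 0 (fun i hi => by
      have := E0_add_E1 (M := M) hi; omega) σ hσ
    refine ⟨(eps0 k).trans Fin.revPerm, simple_compl _ (eps0_simple k hk2), ?_, ?_⟩
    · have hp := pattern_compl (exist0_pattern (σ.trans Fin.revPerm) hσ' (by omega) hkM)
      rwa [trans_rev_rev] at hp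
    · exact compl_vals 0 1 (fun i hi => by
        have := E0_add_E1 (M := k) hi; omega) (eps0 k) (fun i => eps0_val k i)
  · have hσ' := symm_vals_20 σ hσ
    refine ⟨(eps0 k).symm, simple_symm _ (eps0_simple k hk2), ?_, ?_⟩
    · have hp := pattern_symm (exist0_pattern σ.symm hσ' (by omega) hkM)
      rwa [Equiv.symm_symm] at hp
    · exact symm_vals_02 (eps0 k) (fun i => eps0_val k i)
  · have hσ' := compl_vals 3 2 (fun i hi => by
      have := E2_add_E3 (M := M) hi; omega) σ hσ
    have hσ'' := symm_vals_20 (σ.trans Fin.revPerm) hσ'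
    refine ⟨((eps0 k).symm).trans Fin.revPerm,
      simple_compl _ (simple_symm _ (eps0_simple k hk2)), ?_, ?_⟩
    · have hp0 := exist0_pattern ((σ.trans Fin.revPerm).symm) hσ'' (by omega) hkM
      have hp1 := pattern_symm hp0
      rw [Equiv.symm_symm] at hp1
      have hp2 := pattern_compl hp1
      rwa [trans_rev_rev] at hp2
    · exact compl_vals 2 3 (fun i hi => by
        have := E2_add_E3 (M := k) hi; omega) (eps0 k).symm
        (symm_vals_02 (eps0 k) (fun i => eps0_val k i))

end Assembly

end Aux

/-- Let `σ` be exceptional and `3 ≤ m ≤ |σ|`. If `m` is odd, `σ` has no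
simple pattern of size `m`; if `m` is even, `σ` has exactly one simple pattern of size
`m`, namely the exceptional permutation of size `m` of the same type as `σ`. -/
theorem exceptional_simple_patterns {n : ℕ} (σ : Equiv.Perm (Fin n))
    (hσ : IsExceptional σ) (m : ℕ) (h3 : 3 ≤ m) (hm : m ≤ n) :
    (Odd m → ¬ ∃ π : Equiv.Perm (Fin m), IsSimple π ∧ IsPattern π σ) ∧
    (Even m → ∃ π : Equiv.Perm (Fin m), (IsSimple π ∧ IsPattern π σ) ∧
      (∀ t : Fin 4, IsExceptionalOfType t σ → IsExceptionalOfType t π) ∧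
      (∀ π' : Equiv.Perm (Fin m), IsSimple π' → IsPattern π' σ → π' = π)) := by
  obtain ⟨t, M, hM2, hn, hvals⟩ := hσ
  subst hn
  constructor
  · intro hodd h
    obtain ⟨π, hs, hp⟩ := h
    obtain ⟨s, hms, _⟩ := mainT t σ hvals h3 π hs hp
    rw [Nat.odd_iff] at hodd
    omega
  · intro heven
    obtain ⟨k, hk⟩ := heven
    have hm2 : m = 2 * k := by omega
    subst hm2
    have hk2 : 2 ≤ k := by omega
    have hkM : k ≤ M := by omega
    obtain ⟨π, hπs, hπp, hπv⟩ := existT t σ hvals hk2 hkM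
    refine ⟨π, ⟨hπs, hπp⟩, ?_, ?_⟩
    · rintro t' ⟨M', hM'2, hn', hvals'⟩
      have hMM : M' = M := by omega
      subst hMM
      obtain ⟨s, hms, hv⟩ := mainT t' σ hvals' (by omega) π hπs hπp
      have hsk : s = k := by omega
      subst hsk
      exact ⟨s, hk2, rfl, hv⟩
    · intro π' hs' hp'
      obtain ⟨s, hms, hv⟩ := mainT t σ hvals (by omega) π' hs' hp'
      have hsk : s = k := by omega
      subst hsk
      apply Equiv.ext
      intro i
      apply Fin.ext
      rw [hv i, hπv i]
end

section
/- Let π be an exceptional permutation of size 2(n+1) with n ≥ 2, let P be any set of n points of π, and let π' be the exceptional permutation of size 2n of the same type as π. Then there exists an occurrence of π' as a pattern in π which contains all the points of P. -/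
open Equiv Filter Asymptotics

def Hfun (c1 c2 v : ℕ) : ℕ := if v < c1 then v else if v < c2 then v + 1 else v + 2

lemma Hfun_lt {c1 c2 : ℕ} (h : c1 ≤ c2) (u v : ℕ) :
    Hfun c1 c2 u < Hfun c1 c2 v ↔ u < v := by
  unfold Hfun; split_ifs <;> omega

lemma ev0 (m i : ℕ) : exceptionalValue 0 m i = if i < m then 2 * i + 1 else 2 * (i - m) := rfl
lemma ev1 (m i : ℕ) : exceptionalValue 1 m i = if i < m then 2 * (m - i - 1) else 2 * (2 * m - i) - 1 := rfl
lemma ev2 (m i : ℕ) : exceptionalValue 2 m i = if i % 2 = 0 then m + i / 2 else i / 2 := rfl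
lemma ev3 (m i : ℕ) : exceptionalValue 3 m i = if i % 2 = 0 then m - i / 2 - 1 else 2 * m - i / 2 - 1 := rfl

def d1v (t : Fin 4) (n a : ℕ) : ℕ := if (t:ℕ) < 2 then a else 2*a
def d2v (t : Fin 4) (n a : ℕ) : ℕ := if (t:ℕ) < 2 then a + (n+1) else 2*a + 1
def c1v (t : Fin 4) (n a : ℕ) : ℕ :=
  if (t:ℕ) = 0 then 2*a else if (t:ℕ) = 1 then 2*(n-a) else if (t:ℕ) = 2 then a else n - a
def c2v (t : Fin 4) (n a : ℕ) : ℕ :=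
  if (t:ℕ) = 0 then 2*a else if (t:ℕ) = 1 then 2*(n-a) else if (t:ℕ) = 2 then n+a else 2*n - a

lemma E0 (n a j : ℕ) (ha : a ≤ n) (hj : j < 2*n) :
    exceptionalValue 0 (n+1) (if j < a then j else if j + 1 < a + (n+1) then j+1 else j+2)
      = Hfun (2*a) (2*a) (exceptionalValue 0 n j) := by
  simp only [ev0, Hfun]; split_ifs <;> omega

lemma E1 (n a j : ℕ) (ha : a ≤ n) (hj : j < 2*n) :
    exceptionalValue 1 (n+1) (if j < a then j else if j + 1 < a + (n+1) then j+1 else j+2)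
      = Hfun (2*(n-a)) (2*(n-a)) (exceptionalValue 1 n j) := by
  simp only [ev1, Hfun]; split_ifs <;> omega

lemma E2 (n a j : ℕ) (ha : a ≤ n) (hj : j < 2*n) :
    exceptionalValue 2 (n+1) (if j < 2*a then j else if j + 1 < 2*a+1 then j+1 else j+2)
      = Hfun a (n+a) (exceptionalValue 2 n j) := by
  simp only [ev2, Hfun]; split_ifs <;> omega

lemma E3 (n a j : ℕ) (ha : a ≤ n) (hj : j < 2*n) :
    exceptionalValue 3 (n+1) (if j < 2*a then j else if j + 1 < 2*a+1 then j+1 else j+2)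
      = Hfun (n-a) (2*n-a) (exceptionalValue 3 n j) := by
  simp only [ev3, Hfun]; split_ifs <;> omega

lemma c1v_le_c2v (t : Fin 4) (n a : ℕ) (ha : a ≤ n) : c1v t n a ≤ c2v t n a := by
  unfold c1v c2v; split_ifs <;> omega

lemma d1v_lt_d2v (t : Fin 4) (n a : ℕ) : d1v t n a < d2v t n a := by
  unfold d1v d2v; split_ifs <;> omega

lemma d2v_lt (t : Fin 4) (n a : ℕ) (ha : a ≤ n) : d2v t n a < 2*(n+1) := by
  unfold d2v; split_ifs <;> omega

lemma Ekey (t : Fin 4) (n a j : ℕ) (ha : a ≤ n) (hj : j < 2*n) :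
    exceptionalValue t (n+1)
      (if j < d1v t n a then j else if j + 1 < d2v t n a then j+1 else j+2)
      = Hfun (c1v t n a) (c2v t n a) (exceptionalValue t n j) := by
  fin_cases t
  · simpa [d1v, d2v, c1v, c2v] using E0 n a j ha hj
  · simpa [d1v, d2v, c1v, c2v] using E1 n a j ha hj
  · simpa [d1v, d2v, c1v, c2v] using E2 n a j ha hj
  · simpa [d1v, d2v, c1v, c2v] using E3 n a j ha hj


/-- Let `π` be exceptional of size `2(n+1)` with `n ≥ 2`, `P` a set of `n`
points of `π`, and `π'` the exceptional permutation of size `2n` of the same type.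
Then there is an occurrence of `π'` in `π` containing all the points of `P`. -/
theorem exceptional_occurrence_through_points {n : ℕ} (hn : 2 ≤ n) (t : Fin 4)
    (π : Equiv.Perm (Fin (2 * (n + 1)))) (hπ : IsExceptionalOfType t π)
    (π' : Equiv.Perm (Fin (2 * n))) (hπ' : IsExceptionalOfType t π')
    (P : Finset (Fin (2 * (n + 1)))) (hP : P.card = n) :
    ∃ f : Fin (2 * n) ↪o Fin (2 * (n + 1)),
      (∀ i j : Fin (2 * n), π' i < π' j ↔ π (f i) < π (f j)) ∧
      ∀ p ∈ P, ∃ j : Fin (2 * n), f j = p := by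
  obtain ⟨m, hm2, hmeq, hval⟩ := hπ
  have hm : m = n + 1 := by omega
  subst hm
  obtain ⟨m', hm2', hmeq', hval'⟩ := hπ'
  have hm' : m' = n := by omega
  rw [hm'] at hval'
  -- the pairing map
  set G : Fin (2*(n+1)) → Fin (n+1) := fun p =>
    ⟨if (t:ℕ) < 2 then (p:ℕ) % (n+1) else (p:ℕ)/2, by
      split_ifs
      · exact Nat.mod_lt _ (by omega)
      · have := p.isLt; omega⟩ with hG
  -- find a pair avoiding P
  have hex : ∃ a : Fin (n+1), a ∉ P.image G := by
    by_contra h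
    push_neg at h
    have huniv : P.image G = Finset.univ := Finset.eq_univ_iff_forall.mpr h
    have h1 : (P.image G).card ≤ P.card := Finset.card_image_le
    rw [huniv, Finset.card_univ, Fintype.card_fin, hP] at h1
    omega
  obtain ⟨a, haP⟩ := hex
  set A : ℕ := (a : ℕ) with hA
  have hAle : A ≤ n := by have := a.isLt; omega
  have hd12 : d1v t n A < d2v t n A := d1v_lt_d2v t n A
  have hd2 : d2v t n A < 2*(n+1) := d2v_lt t n A hAle
  -- points of P avoid the pair
  have hPd : ∀ p ∈ P, (p:ℕ) ≠ d1v t n A ∧ (p:ℕ) ≠ d2v t n A := by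
    intro p hp
    have hGa : G p ≠ a := by
      intro h
      exact haP (Finset.mem_image.mpr ⟨p, hp, h⟩)
    have key : ¬ ((p:ℕ) = d1v t n A ∨ (p:ℕ) = d2v t n A) := by
      intro hor
      apply hGa
      apply Fin.ext
      show (if (t:ℕ) < 2 then (p:ℕ) % (n+1) else (p:ℕ)/2) = A
      by_cases ht : (t:ℕ) < 2
      · simp only [d1v, d2v, if_pos ht] at hor
        rcases hor with h | h
        · rw [if_pos ht, h]; exact Nat.mod_eq_of_lt (by omega)
        · rw [if_pos ht, h, Nat.add_mod_right]; exact Nat.mod_eq_of_lt (by omega)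
      · simp only [d1v, d2v, if_neg ht] at hor
        rw [if_neg ht]; omega
    tauto
  -- the embedding
  set Fval : ℕ → ℕ := fun j =>
    if j < d1v t n A then j else if j + 1 < d2v t n A then j+1 else j+2 with hFval
  have hFbound : ∀ j : Fin (2*n), Fval (j:ℕ) < 2*(n+1) := by
    intro j
    have := j.isLt
    simp only [hFval]; split_ifs <;> omega
  set f : Fin (2*n) ↪o Fin (2*(n+1)) :=
    OrderEmbedding.ofStrictMono (fun j => ⟨Fval (j:ℕ), hFbound j⟩)
      (by
        intro i j hij
        rw [Fin.lt_def] at hij ⊢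
        simp only [hFval]
        split_ifs <;> omega) with hf
  have hfcoe : ∀ j : Fin (2*n), ((f j : Fin (2*(n+1))) : ℕ) = Fval (j:ℕ) := fun j => rfl
  refine ⟨f, ?_, ?_⟩
  · intro i j
    rw [Fin.lt_def, Fin.lt_def, hval, hval, hval', hval', hfcoe, hfcoe]
    simp only [hFval]
    rw [Ekey t n A i hAle i.isLt, Ekey t n A j hAle j.isLt]
    rw [Hfun_lt (c1v_le_c2v t n A hAle)]
  · intro p hp
    obtain ⟨h1, h2⟩ := hPd p hp
    have hpl := p.isLt
    refine ⟨⟨if (p:ℕ) < d1v t n A then (p:ℕ) else if (p:ℕ) < d2v t n A then (p:ℕ)-1 else (p:ℕ)-2,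
      by split_ifs <;> omega⟩, ?_⟩
    apply Fin.ext
    rw [hfcoe]
    simp only [hFval]
    split_ifs <;> omega
end
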